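/- (Newton–Puiseux polygon formula) Let f ∈ ℂ{z₁}[z₂] be a unitary polynomial in z₂ with f(0,0)=0 and f(0,z₂) ≢ 0, and let m_ρ be the number of roots of f (counted with multiplicity, in a splitting extension of the fraction field of ℂ{z₁}) with valuation ρ ∈ ℚ>0 for the unique extension of the z₁-adic valuation. Then the Newton polygon of f satisfies N(f) = Σ_{ρ} {m_ρ·ρ / m_ρ}. -/

import Mathlib

open Pointwise

/-- The positive quadrant in `ℝ²`. -/
def Q2 : Set (ℝ × ℝ) := {p | 0 ≤ p.1 ∧ 0 ≤ p.2}

/-- The elementary Newton polygon `{ℓ/h}` with horizontal length `ℓ` and vertical height `h`. -/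
noncomputable def elemPoly (l h : ℝ) : Set (ℝ × ℝ) :=
  convexHull ℝ (({((0 : ℝ), h)} + Q2) ∪ ({(l, (0 : ℝ))} + Q2))

/-- The Newton polygon of `f ∈ ℂ[[z₁]][z₂]`: the convex hull of
`⋃_{(a,b) ∈ Supp f} ((a,b) + ℝ≥0²)`, the exponent of `z₁` on the horizontal axis and the
exponent of `z₂` on the vertical axis. -/
noncomputable def newtonPolygon (f : Polynomial (PowerSeries ℂ)) : Set (ℝ × ℝ) :=
  convexHull ℝ
    (⋃ p ∈ {p : ℕ × ℕ | PowerSeries.coeff p.1 (f.coeff p.2) ≠ 0},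
      {((p.1 : ℝ), (p.2 : ℝ))} + Q2)

/-!
Let `ρ_α = v(α)` for the roots `α` of `f` and `h(c) = ∑_α min(ρ_α, c)`. By Vieta the coefficient
of `z₂ ^ k` is `± e_{n-k}(α)`, so by the ultrametric inequality its order is at least the least
value of `∑_{α ∈ S} ρ_α` over the `(n-k)`-element sets `S` of roots, which is at least
`h(c) - c k` for every `c`. When `S` is the set of roots with `ρ_α ≤ c`, it is the only set of its
size reaching that bound, so the coefficient of `z₂ ^ #{ρ_α > c}` has order exactly
`∑_{ρ_α ≤ c} ρ_α`. Hence the support points of `f` lie on the right of all lines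
`x + c y = h(c)` with `c ≥ 0`, and include the points `(∑_{ρ_α ≤ c} ρ_α, #{ρ_α > c})` where these
lines touch. The vertices of the elementary polygons `{m_ρ ρ / m_ρ}` add up to a set with the
same two properties, and any such set spans the same Newton polygon: a point lying between two
consecutive vertices and on the right of the edge joining them is in their convex hull plus
`ℝ≥0²`.
-/

open Finset

noncomputable def newtonHull (S : Set (ℝ × ℝ)) : Set (ℝ × ℝ) := convexHull ℝ (S + Q2)

lemma Q2_eq_Ici : Q2 = Set.Ici 0 := by
  ext p
  simp [Q2, Prod.le_def]

lemma convex_Q2 : Convex ℝ Q2 := Q2_eq_Ici ▸ convex_Ici 0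

lemma zero_mem_Q2 : (0 : ℝ × ℝ) ∈ Q2 := by simp [Q2_eq_Ici]

lemma Q2_add_Q2 : Q2 + Q2 = Q2 := by
  refine (Set.subset_add_left Q2 zero_mem_Q2).antisymm' ?_
  rintro _ ⟨a, ha, b, hb, rfl⟩
  exact ⟨add_nonneg ha.1 hb.1, add_nonneg ha.2 hb.2⟩

lemma convex_newtonHull (S : Set (ℝ × ℝ)) : Convex ℝ (newtonHull S) := convex_convexHull ℝ _

lemma subset_newtonHull (S : Set (ℝ × ℝ)) : S ⊆ newtonHull S :=
  (Set.subset_add_left S zero_mem_Q2).trans (subset_convexHull ℝ _)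

lemma newtonHull_add_newtonHull (S T : Set (ℝ × ℝ)) :
    newtonHull S + newtonHull T = newtonHull (S + T) := by
  rw [newtonHull, newtonHull, ← convexHull_add, newtonHull, add_add_add_comm, Q2_add_Q2]

lemma newtonHull_add_Q2 (S : Set (ℝ × ℝ)) : newtonHull S + Q2 = newtonHull S := by
  rw [← convex_Q2.convexHull_eq, newtonHull, ← convexHull_add, add_assoc, Q2_add_Q2]

lemma add_mem_newtonHull {S : Set (ℝ × ℝ)} {p u : ℝ × ℝ} (hp : p ∈ newtonHull S) (hu : u ∈ Q2) :
    p + u ∈ newtonHull S :=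
  newtonHull_add_Q2 S ▸ Set.add_mem_add hp hu

lemma newtonHull_min {S T : Set (ℝ × ℝ)} (h : S ⊆ newtonHull T) :
    newtonHull S ⊆ newtonHull T :=
  convexHull_min (by rintro _ ⟨p, hp, u, hu, rfl⟩; exact add_mem_newtonHull (h hp) hu)
    (convex_newtonHull T)

lemma newtonHull_eq_of_subset {S T : Set (ℝ × ℝ)} (hST : S ⊆ newtonHull T) (hTS : T ⊆ S) :
    newtonHull S = newtonHull T :=
  (newtonHull_min hST).antisymm (newtonHull_min (hTS.trans (subset_newtonHull S)))

lemma Q2_add_sum_newtonHull {ι : Type*} (s : Finset ι) (S : ι → Set (ℝ × ℝ)) :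
    Q2 + ∑ i ∈ s, newtonHull (S i) = newtonHull (∑ i ∈ s, S i) := by
  classical
  induction s using Finset.induction_on with
  | empty => simp [newtonHull, convex_Q2.convexHull_eq]
  | insert a s ha ih =>
    rw [sum_insert ha, sum_insert ha, ← newtonHull_add_newtonHull, ← ih, add_left_comm]

lemma mem_newtonHull_of_between {S : Set (ℝ × ℝ)} {P P' : ℝ × ℝ} (hP : P ∈ newtonHull S)
    (hP' : P' ∈ newtonHull S) {c x k : ℝ} (hline : P'.1 + c * P'.2 = P.1 + c * P.2)
    (hk : P.2 ≤ k) (hk' : k < P'.2) (hx : P.1 + c * P.2 ≤ x + c * k) :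
    (x, k) ∈ newtonHull S := by
  obtain ⟨θ, hθ, hθ0, hθ1⟩ : ∃ θ : ℝ, θ * (P'.2 - P.2) = k - P.2 ∧ 0 ≤ θ ∧ θ ≤ 1 :=
    ⟨_, div_mul_cancel₀ _ (by linarith), div_nonneg (by linarith) (by linarith),
      (div_le_one (by linarith)).2 (by linarith)⟩
  have hmem := convex_newtonHull S hP' hP hθ0 (sub_nonneg.2 hθ1) (add_sub_cancel θ 1)
  convert add_mem_newtonHull hmem (show (x + c * k - (P.1 + c * P.2), (0 : ℝ)) ∈ Q2 from
    ⟨sub_nonneg.2 hx, le_rfl⟩) using 1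
  ext
  · simp only [Prod.fst_add, Prod.smul_fst, smul_eq_mul]
    linear_combination -θ * hline + c * hθ
  · simp only [Prod.snd_add, Prod.smul_snd, smul_eq_mul]
    linear_combination -hθ

lemma elemPoly_eq_newtonHull (l h : ℝ) : elemPoly l h = newtonHull {(0, h), (l, 0)} := by
  rw [elemPoly, newtonHull, Set.insert_eq, Set.union_add]

lemma convexHull_Q2_add_sum_elemPoly {κ : Type*} (s : Finset κ) (l h : κ → ℝ) :
    convexHull ℝ (Q2 + ∑ j ∈ s, elemPoly (l j) (h j)) =
      newtonHull (∑ j ∈ s, ({(0, h j), (l j, 0)} : Set (ℝ × ℝ))) := by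
  simp_rw [elemPoly_eq_newtonHull, Q2_add_sum_newtonHull]
  exact (convex_newtonHull _).convexHull_eq

section Slopes

variable {ι : Type*} [Fintype ι] (ρ : ι → ℚ)

/-- The support function `c ↦ min_{p ∈ N} (p.1 + c * p.2)` of the polygon with slopes `ρ`. -/
def supportFun (c : ℚ) : ℚ := ∑ i, min (ρ i) c

/-- The point where the line `x + c y = supportFun ρ c` touches the polygon: slopes `ρ i ≤ c`
contribute horizontally, the others vertically. -/
noncomputable def vertexAt (c : ℚ) : ℝ × ℝ :=
  ∑ i, if ρ i ≤ c then ((ρ i : ℝ), 0) else (0, 1)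

lemma vertexAt_fst (c : ℚ) : (vertexAt ρ c).1 = ((∑ i with ρ i ≤ c, ρ i : ℚ) : ℝ) := by
  simp [vertexAt, Prod.fst_sum, apply_ite Prod.fst, Finset.sum_filter, apply_ite (Rat.cast : ℚ → ℝ)]

lemma vertexAt_snd (c : ℚ) : (vertexAt ρ c).2 = #{i | c < ρ i} := by
  simp [vertexAt, Prod.snd_sum, Finset.sum_ite, not_le]

/-- Both `c' = c` and `c'` the largest slope below `c` qualify: these are the two ends of the edge
of slope `c`. -/
lemma vertexAt_fst_add_mul_snd {c' c : ℚ} (hle : ∀ i, ρ i ≤ c' → ρ i ≤ c)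
    (hge : ∀ i, c' < ρ i → c ≤ ρ i) :
    (vertexAt ρ c').1 + c * (vertexAt ρ c').2 = supportFun ρ c := by
  simp only [vertexAt, supportFun, Prod.fst_sum, Prod.snd_sum, Finset.mul_sum, ← sum_add_distrib,
    Rat.cast_sum]
  refine sum_congr rfl fun i _ => ?_
  split_ifs with h
  · simp [min_eq_left (hle i h)]
  · simp [min_eq_right (hge i (not_le.1 h))]

lemma supportFun_le (t : Finset ι) (c : ℚ) :
    supportFun ρ c ≤ ∑ i ∈ t, ρ i + (Fintype.card ι - #t) * c := by
  classical
  rw [supportFun, ← sum_add_sum_compl t, ← Nat.cast_sub (card_le_univ t), ← card_compl]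
  exact add_le_add (sum_le_sum fun i _ => min_le_left _ _)
    ((sum_le_sum fun i _ => min_le_right _ _).trans_eq (by simp))

lemma supportFun_lt {t : Finset ι} {c : ℚ} (h : ∃ i ∈ t, c < ρ i) :
    supportFun ρ c < ∑ i ∈ t, ρ i + (Fintype.card ι - #t) * c := by
  classical
  rw [supportFun, ← sum_add_sum_compl t, ← Nat.cast_sub (card_le_univ t), ← card_compl]
  obtain ⟨i, hi, hci⟩ := h
  exact add_lt_add_of_lt_of_le
    (sum_lt_sum (fun i _ => min_le_left _ _) ⟨i, hi, min_lt_iff.2 (Or.inr hci)⟩)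
    ((sum_le_sum fun i _ => min_le_right _ _).trans_eq (by simp))

lemma supportFun_eq_sum_filter_le (c : ℚ) :
    supportFun ρ c = ∑ i with ρ i ≤ c, ρ i + (Fintype.card ι - #{i | ρ i ≤ c}) * c := by
  classical
  rw [supportFun, ← sum_add_sum_compl {i | ρ i ≤ c}, ← Nat.cast_sub (card_le_univ _),
    ← card_compl, ← nsmul_eq_mul, ← sum_const]
  congr 1 <;> refine sum_congr rfl fun i hi => ?_ <;> simp at hi
  · exact min_eq_left hi
  · exact min_eq_right hi.le

lemma exists_consecutive_slopes (hρ : ∀ i, 0 ≤ ρ i) {k : ℝ} (hk0 : 0 ≤ k)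
    (hk : k < #{i | 0 < ρ i}) :
    ∃ c' c : ℚ, 0 ≤ c' ∧ c' ≤ c ∧ (#{i | c < ρ i} : ℝ) ≤ k ∧ k < #{i | c' < ρ i} ∧
      ∀ i, c' < ρ i → c ≤ ρ i := by
  classical
  set T := insert 0 (univ.image ρ)
  have hρT : ∀ i, ρ i ∈ T := fun i => mem_insert_of_mem (mem_image_of_mem ρ (mem_univ i))
  have hT : ∀ τ ∈ T, 0 ≤ τ := by simpa [T] using hρ
  set A := T.filter fun τ => (#{i | τ < ρ i} : ℝ) ≤ k
  have hA : A.Nonempty := by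
    refine ⟨T.max' (insert_nonempty _ _), mem_filter.2 ⟨max'_mem _ _, ?_⟩⟩
    rw [filter_false_of_mem fun i _ => not_lt.2 (le_max' T _ (hρT i))]
    simpa using hk0
  obtain ⟨hcT, hck⟩ := mem_filter.1 (min'_mem A hA)
  set c := A.min' hA
  have hc0 : 0 < c := (hT c hcT).lt_of_ne fun h => by rw [← h] at hck; linarith
  set B := T.filter (· < c)
  have hB : B.Nonempty := ⟨0, mem_filter.2 ⟨mem_insert_self _ _, hc0⟩⟩
  obtain ⟨hc'T, hc'c⟩ := mem_filter.1 (max'_mem B hB)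
  refine ⟨B.max' hB, c, hT _ hc'T, hc'c.le, hck, ?_, fun i hi => ?_⟩
  · by_contra! h
    exact (min'_le A _ (mem_filter.2 ⟨hc'T, h⟩)).not_gt hc'c
  · by_contra! h
    exact hi.not_ge (le_max' B (ρ i) (mem_filter.2 ⟨hρT i, h⟩))

lemma mem_newtonHull_vertexAt (hρ : ∀ i, 0 ≤ ρ i) {p : ℝ × ℝ} (hp : 0 ≤ p.2)
    (h : ∀ c : ℚ, 0 ≤ c → (supportFun ρ c : ℝ) ≤ p.1 + c * p.2) :
    p ∈ newtonHull (vertexAt ρ '' Set.Ici 0) := by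
  have hV : ∀ c : ℚ, 0 ≤ c → vertexAt ρ c ∈ newtonHull (vertexAt ρ '' Set.Ici 0) :=
    fun c hc => subset_newtonHull _ ⟨c, hc, rfl⟩
  have hsupp : ∀ c : ℚ, (vertexAt ρ c).1 + c * (vertexAt ρ c).2 = supportFun ρ c :=
    fun c => vertexAt_fst_add_mul_snd ρ (fun _ h => h) (fun _ h => h.le)
  obtain ⟨x, k⟩ := p
  by_cases hk : (#{i | 0 < ρ i} : ℝ) ≤ k
  · have hx := h 0 le_rfl
    have h0 := hsupp 0
    simp only [Rat.cast_zero, zero_mul, add_zero] at hx h0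
    convert add_mem_newtonHull (hV 0 le_rfl)
      (show (x - (vertexAt ρ 0).1, k - (vertexAt ρ 0).2) ∈ Q2 from
        ⟨by linarith, by rw [vertexAt_snd]; exact sub_nonneg.2 hk⟩) using 1
    ext <;> simp
  · obtain ⟨c', c, hc'0, hc'c, hck, hkc', hsep⟩ :=
      exists_consecutive_slopes ρ hρ hp (not_le.1 hk)
    refine mem_newtonHull_of_between (hV c (hc'0.trans hc'c)) (hV c' hc'0) (c := c) ?_
      (by rwa [vertexAt_snd]) (by rwa [vertexAt_snd]) (by rw [hsupp]; exact h c (hc'0.trans hc'c))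
    rw [hsupp, vertexAt_fst_add_mul_snd ρ (fun _ h => h.trans hc'c) hsep]

lemma newtonHull_eq_newtonHull_vertexAt (hρ : ∀ i, 0 ≤ ρ i) {S : Set (ℝ × ℝ)}
    (hV : vertexAt ρ '' Set.Ici 0 ⊆ S) (hS₀ : ∀ p ∈ S, 0 ≤ p.2)
    (hS : ∀ p ∈ S, ∀ c : ℚ, 0 ≤ c → (supportFun ρ c : ℝ) ≤ p.1 + c * p.2) :
    newtonHull S = newtonHull (vertexAt ρ '' Set.Ici 0) :=
  newtonHull_eq_of_subset (fun p hp => mem_newtonHull_vertexAt ρ hρ (hS₀ p hp) (hS p hp)) hV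

lemma sum_eq_sum_count_pos {M : Type*} [AddCommMonoid M] (hρ : ∀ i, 0 ≤ ρ i) (g : ℚ → M)
    (hg : g 0 = 0) :
    ∑ i, g (ρ i) =
      ∑ τ ∈ (univ.val.map ρ).toFinset.filter (0 < ·), (univ.val.map ρ).count τ • g τ := by
  classical
  rw [sum_filter_of_ne, ← Finset.sum_multiset_map_count, Multiset.map_map]
  · rfl
  intro τ hτ hne
  obtain ⟨i, -, rfl⟩ := Multiset.mem_map.1 (Multiset.mem_toFinset.1 hτ)
  exact (hρ i).lt_of_ne fun h => hne (by rw [← h, hg, smul_zero])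

lemma newtonHull_sum_pairs (hρ : ∀ i, 0 ≤ ρ i) :
    newtonHull (∑ τ ∈ (univ.val.map ρ).toFinset.filter (0 < ·),
      ({(0, ((univ.val.map ρ).count τ : ℝ)), (((univ.val.map ρ).count τ : ℝ) * τ, 0)} :
        Set (ℝ × ℝ))) = newtonHull (vertexAt ρ '' Set.Ici 0) := by
  refine newtonHull_eq_newtonHull_vertexAt ρ hρ ?_ (fun p hp => ?_) fun p hp c hc => ?_
  · rintro _ ⟨c, hc, rfl⟩
    rw [vertexAt, sum_eq_sum_count_pos ρ hρ (fun τ => if τ ≤ c then ((τ : ℝ), 0) else (0, 1))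
      (by simp [Set.mem_Ici.1 hc])]
    refine Set.finsetSum_mem_finsetSum _ _ _ fun τ _ => ?_
    split_ifs <;> simp [Prod.smul_mk]
  all_goals obtain ⟨g, hg, rfl⟩ := (Set.mem_finsetSum _ _ _).1 hp
  · rw [Prod.snd_sum]
    refine sum_nonneg fun τ hτ => ?_
    rcases hg hτ with h | (h : g τ = _) <;> simp [h]
  rw [supportFun, sum_eq_sum_count_pos ρ hρ (min · c) (min_eq_left hc), Prod.fst_sum,
    Prod.snd_sum, mul_sum, ← sum_add_distrib]
  push_cast
  refine sum_le_sum fun τ hτ => ?_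
  rcases hg hτ with h | (h : g τ = _) <;> simp only [h, nsmul_eq_mul] <;> push_cast
  · rw [zero_add, mul_comm (c : ℝ)]
    exact mul_le_mul_of_nonneg_left (min_le_right _ _) (Nat.cast_nonneg _)
  · rw [mul_zero, add_zero]
    exact mul_le_mul_of_nonneg_left (min_le_left _ _) (Nat.cast_nonneg _)

end Slopes

open Classical in
noncomputable def ratAddValuation {L : Type*} [Field L] (v : L → ℚ)
    (hv_mul : ∀ x y : L, x ≠ 0 → y ≠ 0 → v (x * y) = v x + v y)
    (hv_add : ∀ x y : L, x ≠ 0 → y ≠ 0 → x + y ≠ 0 → min (v x) (v y) ≤ v (x + y)) :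
    AddValuation L (WithTop ℚ) :=
  AddValuation.of (fun x => if x = 0 then ⊤ else (v x : WithTop ℚ)) (by simp)
    (by simpa using hv_mul 1 1 one_ne_zero one_ne_zero)
    (fun x y => by
      by_cases hx : x = 0
      · simp [hx]
      by_cases hy : y = 0
      · simp [hy]
      by_cases hxy : x + y = 0
      · simp [hxy]
      simp only [hx, hy, hxy, if_false]
      exact_mod_cast hv_add x y hx hy hxy)
    (fun x y => by
      by_cases hx : x = 0
      · simp [hx]
      by_cases hy : y = 0
      · simp [hy]
      simp [hx, hy, hv_mul x y hx hy])

lemma ratAddValuation_of_ne_zero {L : Type*} [Field L] {v : L → ℚ}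
    (hv_mul : ∀ x y : L, x ≠ 0 → y ≠ 0 → v (x * y) = v x + v y)
    (hv_add : ∀ x y : L, x ≠ 0 → y ≠ 0 → x + y ≠ 0 → min (v x) (v y) ≤ v (x + y))
    {x : L} (hx : x ≠ 0) : ratAddValuation v hv_mul hv_add x = v x := by
  classical
  exact if_neg hx

lemma AddValuation.map_prod_of_eq {L ι : Type*} [Field L] (w : AddValuation L (WithTop ℚ))
    {α : ι → L} {ρ : ι → ℚ} (hρ : ∀ i, w (α i) = ρ i) (t : Finset ι) :
    w (∏ i ∈ t, α i) = ((∑ i ∈ t, ρ i : ℚ) : WithTop ℚ) := by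
  classical
  induction t using Finset.induction_on with
  | empty => simp
  | insert a t ha ih => rw [prod_insert ha, sum_insert ha, w.map_mul, ih, hρ, WithTop.coe_add]

section Esymm

variable {L : Type*} [Field L] (w : AddValuation L (WithTop ℚ)) {ι : Type*} [Fintype ι]
  {α : ι → L} {ρ : ι → ℚ}

lemma le_valuation_esymm (hρ : ∀ i, w (α i) = ρ i) (j : ℕ) (c : ℚ) :
    ((supportFun ρ c - (Fintype.card ι - j) * c : ℚ) : WithTop ℚ) ≤
      w ((univ.val.map α).esymm j) := by
  rw [Finset.esymm_map_val]
  refine w.map_le_sum fun t ht => ?_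
  rw [w.map_prod_of_eq hρ, WithTop.coe_le_coe, ← (mem_powersetCard.1 ht).2]
  linarith [supportFun_le ρ t c]

/-- The product of the `α i` with `ρ i ≤ c` is the only term of minimal valuation in the
elementary symmetric function. -/
lemma valuation_esymm_card_filter_le (hρ : ∀ i, w (α i) = ρ i) (c : ℚ) :
    w ((univ.val.map α).esymm #{i | ρ i ≤ c}) = ((∑ i with ρ i ≤ c, ρ i : ℚ) : WithTop ℚ) := by
  classical
  set t₀ : Finset ι := {i | ρ i ≤ c}
  have ht₀ : t₀ ∈ powersetCard #t₀ univ := mem_powersetCard.2 ⟨subset_univ _, rfl⟩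
  rw [Finset.esymm_map_val, ← add_sum_erase _ _ ht₀, w.map_add_eq_of_lt_left] <;>
    rw [w.map_prod_of_eq hρ]
  refine w.map_lt_sum WithTop.coe_ne_top fun t ht => ?_
  obtain ⟨hne, ht⟩ := mem_erase.1 ht
  have hcard := (mem_powersetCard.1 ht).2
  obtain ⟨i, hit, hi⟩ : ∃ i ∈ t, c < ρ i := by
    by_contra! h
    exact hne (eq_of_subset_of_card_le (fun i hi => by simpa [t₀] using h i hi) hcard.ge)
  have hlt := supportFun_lt ρ ⟨i, hit, hi⟩
  rw [hcard] at hlt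
  rw [w.map_prod_of_eq hρ, WithTop.coe_lt_coe]
  linarith [supportFun_eq_sum_filter_le ρ c]

end Esymm

namespace Polynomial.Monic

variable {L : Type*} [Field L] (w : AddValuation L (WithTop ℚ)) {p : L[X]}

lemma valuation_coeff_eq_esymm (hp : p.Monic) (hs : p.Splits) {k : ℕ} (hk : k ≤ p.natDegree) :
    w (p.coeff k) = w (p.roots.esymm (p.natDegree - k)) := by
  rw [coeff_eq_esymm_roots_of_splits hs hk, hp.leadingCoeff, one_mul, w.map_mul, w.map_pow,
    w.map_neg, w.map_one, smul_zero, zero_add]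

variable [DecidableEq L]

lemma le_valuation_coeff (hp : p.Monic) (hs : p.Splits) {ρ : p.roots → ℚ}
    (hρ : ∀ α : p.roots, w α = ρ α) {k : ℕ} (hk : k ≤ p.natDegree) (c : ℚ) :
    ((supportFun ρ c - c * k : ℚ) : WithTop ℚ) ≤ w (p.coeff k) := by
  have h := le_valuation_esymm w (α := fun α : p.roots => (α : L)) hρ
    (p.natDegree - k) c
  rwa [Multiset.map_univ_coe, ← valuation_coeff_eq_esymm w hp hs hk, Multiset.card_coe,
    ← hs.natDegree_eq_card_roots, Nat.cast_sub hk, sub_sub_cancel, mul_comm] at h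

lemma valuation_coeff_card_lt (hp : p.Monic) (hs : p.Splits) {ρ : p.roots → ℚ}
    (hρ : ∀ α : p.roots, w α = ρ α) (c : ℚ) :
    w (p.coeff #{α | c < ρ α}) = ((∑ α with ρ α ≤ c, ρ α : ℚ) : WithTop ℚ) := by
  have hcard : #{α | c < ρ α} + #{α | ρ α ≤ c} = p.natDegree := by
    rw [hs.natDegree_eq_card_roots, ← Multiset.card_coe, ← card_univ]
    simpa [add_comm] using card_filter_add_card_filter_not (s := univ) (fun α => ρ α ≤ c)
  rw [valuation_coeff_eq_esymm w hp hs (by omega), show p.natDegree - _ = #{α | ρ α ≤ c} by omega]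
  simpa using valuation_esymm_card_filter_le w (α := fun α : p.roots => (α : L)) hρ c

/-- Otherwise the roots of smallest valuation would give a coefficient of negative valuation. -/
lemma valuation_roots_nonneg (hp : p.Monic) (hs : p.Splits) {ρ : p.roots → ℚ}
    (hρ : ∀ α : p.roots, w α = ρ α) (hcoeff : ∀ k, 0 ≤ w (p.coeff k)) (α : p.roots) :
    0 ≤ ρ α := by
  by_contra! hα
  have hneg : ∑ β with ρ β ≤ ρ α, ρ β < 0 :=
    sum_neg (fun β hβ => (mem_filter.1 hβ).2.trans_lt hα) ⟨α, mem_filter.2 ⟨mem_univ _, le_rfl⟩⟩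
  have h := hcoeff #{β | ρ α < ρ β}
  rw [valuation_coeff_card_lt w hp hs hρ, WithTop.coe_nonneg] at h
  exact hneg.not_ge h

end Polynomial.Monic

section PowerSeries

variable {K L : Type*} [Field K] [Field L] (φ : PowerSeries K →+* L)
  (w : AddValuation L (WithTop ℚ))

lemma valuation_map_eq_order (hX : w (φ PowerSeries.X) = 1)
    (hU : ∀ u : (PowerSeries K)ˣ, w (φ u) = 0) {a : PowerSeries K} (ha : a ≠ 0) :
    w (φ a) = (a.order.toNat : ℚ) := by
  obtain ⟨u, hu⟩ := PowerSeries.isUnit_divided_by_X_pow_order ha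
  conv_lhs => rw [← PowerSeries.X_pow_order_mul_divXPowOrder (f := a), ← hu]
  rw [map_mul, map_pow, w.map_mul, w.map_pow, hX, hU, add_zero]
  simp

def supportPoints (f : Polynomial (PowerSeries K)) : Set (ℝ × ℝ) :=
  (fun q : ℕ × ℕ => ((q.1 : ℝ), (q.2 : ℝ))) ''
    {q | PowerSeries.coeff q.1 (f.coeff q.2) ≠ 0}

lemma snd_nonneg_of_mem_supportPoints {f : Polynomial (PowerSeries K)} {q : ℝ × ℝ}
    (hq : q ∈ supportPoints f) : 0 ≤ q.2 := by
  obtain ⟨_, -, rfl⟩ := hq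
  positivity

variable [DecidableEq L] {f : Polynomial (PowerSeries K)} (hmonic : f.Monic)
  (hsplit : (f.map φ).Splits) (hord : ∀ a ≠ 0, w (φ a) = (a.order.toNat : ℚ))
  {ρ : (f.map φ).roots → ℚ} (hρ : ∀ α : (f.map φ).roots, w α = ρ α)

include hmonic hsplit hord hρ

lemma range_vertexAt_subset_supportPoints : Set.range (vertexAt ρ) ⊆ supportPoints f := by
  rintro _ ⟨c, rfl⟩
  have h := (hmonic.map φ).valuation_coeff_card_lt w hsplit hρ c
  rw [Polynomial.coeff_map] at h
  have hfk : f.coeff #{α | c < ρ α} ≠ 0 := by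
    rintro h0
    rw [h0, map_zero, w.map_zero] at h
    exact WithTop.top_ne_coe h
  rw [hord _ hfk, WithTop.coe_inj] at h
  refine ⟨(_, #{α | c < ρ α}), PowerSeries.coeff_order hfk, ?_⟩
  ext
  · rw [vertexAt_fst, ← h]
    norm_cast
  · simp [vertexAt_snd]

lemma valuation_roots_map_nonneg (α : (f.map φ).roots) : 0 ≤ ρ α :=
  (hmonic.map φ).valuation_roots_nonneg w hsplit hρ (fun k => by
    rw [Polynomial.coeff_map]
    by_cases hk : f.coeff k = 0
    · simp [hk]
    · simp [hord _ hk]) α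

lemma supportFun_le_of_mem_supportPoints {q : ℝ × ℝ} (hq : q ∈ supportPoints f) (c : ℚ) :
    (supportFun ρ c : ℝ) ≤ q.1 + c * q.2 := by
  obtain ⟨⟨a, k⟩, hak, rfl⟩ := hq
  have hfk : f.coeff k ≠ 0 := by
    rintro h0
    simp [h0] at hak
  have hk : k ≤ (f.map φ).natDegree :=
    (hmonic.natDegree_map φ).symm ▸ Polynomial.le_natDegree_of_ne_zero hfk
  have h := (hmonic.map φ).le_valuation_coeff w hsplit hρ hk c
  rw [Polynomial.coeff_map, hord _ hfk, WithTop.coe_le_coe] at h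
  have ha : (f.coeff k).order.toNat ≤ a := ENat.toNat_le_of_le_natCast (PowerSeries.order_le a hak)
  have : (supportFun ρ c : ℝ) - c * k ≤ a := by exact_mod_cast h.trans (by exact_mod_cast ha)
  simp only
  linarith

end PowerSeries

lemma newtonPolygon_eq_newtonHull (f : Polynomial (PowerSeries ℂ)) :
    newtonPolygon f = newtonHull (supportPoints f) := by
  rw [newtonPolygon, newtonHull, supportPoints, ← Set.iUnion₂_add, Set.image_eq_iUnion]

theorem newton_puiseux_general {L : Type*} [Field L] [Algebra (PowerSeries ℂ) L]
    (hinj : Function.Injective (algebraMap (PowerSeries ℂ) L))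
    (v : L → ℚ)
    (hv_mul : ∀ x y : L, x ≠ 0 → y ≠ 0 → v (x * y) = v x + v y)
    (hv_add : ∀ x y : L, x ≠ 0 → y ≠ 0 → x + y ≠ 0 → min (v x) (v y) ≤ v (x + y))
    (hvX : v (algebraMap (PowerSeries ℂ) L PowerSeries.X) = 1)
    (hvU : ∀ u : (PowerSeries ℂ)ˣ, v (algebraMap (PowerSeries ℂ) L (u : PowerSeries ℂ)) = 0)
    (f : Polynomial (PowerSeries ℂ)) (hmonic : f.Monic)
    (h0 : f.coeff 0 ≠ 0)
    (hsplit : Polynomial.Splits (f.map (algebraMap (PowerSeries ℂ) L))) :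
    newtonPolygon f =
      convexHull ℝ (Q2 +
        ∑ ρ ∈ ((f.map (algebraMap (PowerSeries ℂ) L)).roots.map v).toFinset.filter
            (fun ρ => 0 < ρ),
          elemPoly
            (((((f.map (algebraMap (PowerSeries ℂ) L)).roots.map v).count ρ : ℝ)) * (ρ : ℝ))
            ((((f.map (algebraMap (PowerSeries ℂ) L)).roots.map v).count ρ : ℝ))) := by
  classical
  set φ := algebraMap (PowerSeries ℂ) L
  set w := ratAddValuation v hv_mul hv_add
  have hord : ∀ a ≠ 0, w (φ a) = (a.order.toNat : ℚ) :=
    fun a => valuation_map_eq_order φ w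
      (by rw [ratAddValuation_of_ne_zero _ _ ((map_ne_zero_iff φ hinj).2 PowerSeries.X_ne_zero),
        hvX, WithTop.coe_one])
      (fun u => by rw [ratAddValuation_of_ne_zero _ _ (u.isUnit.map φ).ne_zero, hvU,
        WithTop.coe_zero])
  have hroots : ∀ α ∈ (f.map φ).roots, α ≠ 0 := by
    rintro _ hα rfl
    rw [Polynomial.mem_roots', Polynomial.IsRoot, ← Polynomial.coeff_zero_eq_eval_zero,
      Polynomial.coeff_map, map_eq_zero_iff φ hinj] at hα
    exact h0 hα.2
  set ρ : (f.map φ).roots → ℚ := fun α => v α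
  have hρw : ∀ α : (f.map φ).roots, w α = ρ α :=
    fun α => ratAddValuation_of_ne_zero _ _ (hroots _ Multiset.coe_mem)
  have hρ := valuation_roots_map_nonneg φ w hmonic hsplit hord hρw
  have hs : (f.map φ).roots.map v = univ.val.map ρ := (Multiset.map_univ_comp_coe _ _).symm
  rw [hs, newtonPolygon_eq_newtonHull, convexHull_Q2_add_sum_elemPoly, newtonHull_sum_pairs ρ hρ]
  exact newtonHull_eq_newtonHull_vertexAt ρ hρ
    ((Set.image_subset_range _ _).trans
      (range_vertexAt_subset_supportPoints φ w hmonic hsplit hord hρw))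
    (fun _ => snd_nonneg_of_mem_supportPoints)
    fun _ hq c _ => supportFun_le_of_mem_supportPoints φ w hmonic hsplit hord hρw hq c

/-- **Newton–Puiseux polygon formula.** Let `f` be a unitary polynomial in `z₂` over `ℂ{z₁}`
with `f(0,0) = 0`, not divisible by `z₂`, split over a field extension `L` of the fraction
field to which the `z₁`-adic valuation extends (uniquely) as `v`. If `m_ρ` denotes the number
of roots of `f` in `L` of valuation `ρ` (with multiplicity), then
`N(f) = Σ_{ρ > 0} {m_ρ·ρ / m_ρ}`. -/
theorem newton_puiseux {L : Type*} [Field L] [Algebra (PowerSeries ℂ) L]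
    (hinj : Function.Injective (algebraMap (PowerSeries ℂ) L))
    (v : L → ℚ)
    (hv_mul : ∀ x y : L, x ≠ 0 → y ≠ 0 → v (x * y) = v x + v y)
    (hv_add : ∀ x y : L, x ≠ 0 → y ≠ 0 → x + y ≠ 0 → min (v x) (v y) ≤ v (x + y))
    (hvX : v (algebraMap (PowerSeries ℂ) L PowerSeries.X) = 1)
    (hvU : ∀ u : (PowerSeries ℂ)ˣ, v (algebraMap (PowerSeries ℂ) L (u : PowerSeries ℂ)) = 0)
    (f : Polynomial (PowerSeries ℂ)) (hmonic : f.Monic)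
    (h00 : PowerSeries.constantCoeff (f.coeff 0) = 0)
    (h0 : f.coeff 0 ≠ 0)
    (hsplit : Polynomial.Splits (f.map (algebraMap (PowerSeries ℂ) L))) :
    newtonPolygon f =
      convexHull ℝ (Q2 +
        ∑ ρ ∈ ((f.map (algebraMap (PowerSeries ℂ) L)).roots.map v).toFinset.filter
            (fun ρ => 0 < ρ),
          elemPoly
            (((((f.map (algebraMap (PowerSeries ℂ) L)).roots.map v).count ρ : ℝ)) * (ρ : ℝ))
            ((((f.map (algebraMap (PowerSeries ℂ) L)).roots.map v).count ρ : ℝ))) :=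
  newton_puiseux_general hinj v hv_mul hv_add hvX hvU f hmonic h0 hsplit
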